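/- arXiv:1809.07382 — 4 statements merged into one kernel-verified Lean document; each statement's English description precedes it below -/
import Mathlib

section
/- If a finite simple graph G contains two distinct vertices u and v such that |N(u) ∩ N(v)| = deg(u) − 1 = deg(v) − 1, then G is not distance magic. -/
open scoped Classical
open Finset

/-- Weight of a vertex: sum of labels over its open neighborhood. -/
noncomputable def wsum {V : Type*} [Fintype V] (G : SimpleGraph V) (f : V → ℕ) (u : V) : ℕ :=
  ∑ v ∈ Finset.univ.filter (fun v => G.Adj u v), f v

/-- A graph is distance magic if some bijective labeling by 1,...,n has constant weights. -/
def IsDistanceMagic {V : Type*} [Fintype V] (G : SimpleGraph V) : Prop :=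
  ∃ (f : V ≃ Fin (Fintype.card V)) (c : ℕ),
    ∀ u, wsum G (fun v => (f v : ℕ) + 1) u = c

/-- `G` is `r`-regular. -/
def IsRegularDeg {V : Type*} [Fintype V] (G : SimpleGraph V) (r : ℕ) : Prop :=
  ∀ u : V, (Finset.univ.filter (fun v => G.Adj u v)).card = r

/-- `(a,d)`-distance antimagic: some bijective labeling by 1,...,n has weight set
`{a, a+d, ..., a+(n-1)d}`. -/
def IsDistAntimagic {V : Type*} [Fintype V] (G : SimpleGraph V) (a d : ℕ) : Prop :=
  ∃ f : V ≃ Fin (Fintype.card V),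
    Finset.image (fun u => wsum G (fun v => (f v : ℕ) + 1) u) Finset.univ
      = Finset.image (fun i : Fin (Fintype.card V) => a + (i : ℕ) * d) Finset.univ

/-- Circulant graph on `N` vertices with jumps `1,...,m` (so `H_{2m,N} = C_N^m`). -/
def circulant (N m : ℕ) : SimpleGraph (Fin N) :=
  SimpleGraph.fromRel (fun i j => ∃ k, 1 ≤ k ∧ k ≤ m ∧ ((i : ℕ) + k) % N = (j : ℕ))

/-- The graph `(K_{n-1} - M) + K_1`: vertex `0` joined to all, and vertices `1,...,n-1`
forming a complete graph minus the perfect matching pairing `i` with `i + (n-1)/2 (mod n-1)`. -/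
def calG (n : ℕ) : SimpleGraph (Fin n) :=
  SimpleGraph.fromRel (fun i j =>
    (i : ℕ) = 0 ∨ (j : ℕ) = 0 ∨
      ¬ (((i : ℕ) - 1 + (n - 1) / 2) % (n - 1) = (j : ℕ) - 1))

/-- Lexicographic product `G ∘ H`. -/
def lexProd {α β : Type*} (G : SimpleGraph α) (H : SimpleGraph β) : SimpleGraph (α × β) where
  Adj x y := G.Adj x.1 y.1 ∨ (x.1 = y.1 ∧ H.Adj x.2 y.2)
  symm := ⟨by
    rintro ⟨a, b⟩ ⟨c, d⟩ (h | ⟨h1, h2⟩)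
    · exact Or.inl h.symm
    · exact Or.inr ⟨h1.symm, h2.symm⟩⟩
  loopless := ⟨by
    rintro ⟨a, b⟩ (h | ⟨-, h⟩)
    · exact G.loopless.irrefl a h
    · exact H.loopless.irrefl b h⟩

/-- Direct (tensor) product `G × H`. -/
def tensorProd {α β : Type*} (G : SimpleGraph α) (H : SimpleGraph β) : SimpleGraph (α × β) where
  Adj x y := G.Adj x.1 y.1 ∧ H.Adj x.2 y.2
  symm := ⟨fun _ _ h => ⟨h.1.symm, h.2.symm⟩⟩
  loopless := ⟨fun x h => G.loopless.irrefl x.1 h.1⟩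

/-- The Harary graph `H_{3,n}`. -/
noncomputable def harary3 (n : ℕ) : SimpleGraph (Fin n) :=
  circulant n 1 ⊔ SimpleGraph.fromRel (fun i j =>
    if n % 2 = 0 then
      ∃ k, 1 ≤ k ∧ k ≤ n / 2 ∧ (i : ℕ) = k ∧ (j : ℕ) = (k + n / 2) % n
    else
      ((i : ℕ) = 0 ∧ ((j : ℕ) = (n - 1) / 2 ∨ (j : ℕ) = (n + 1) / 2)) ∨
      (∃ k, 1 ≤ k ∧ k < (n - 1) / 2 ∧ (i : ℕ) = k ∧ (j : ℕ) = (k + (n + 1) / 2) % n))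

/-- The Harary graph `H_{2n+1,2n+3}`: `C_{2n+3}^n` together with edges `v_0 v_{n+1}`,
`v_0 v_{n+2}` and `v_i v_{i+n+2}` for `1 ≤ i < n+1`. -/
def hararyOdd (n : ℕ) : SimpleGraph (Fin (2 * n + 3)) :=
  circulant (2 * n + 3) n ⊔ SimpleGraph.fromRel (fun i j =>
    ((i : ℕ) = 0 ∧ ((j : ℕ) = n + 1 ∨ (j : ℕ) = n + 2)) ∨
    (∃ k, 1 ≤ k ∧ k < n + 1 ∧ (i : ℕ) = k ∧ (j : ℕ) = k + n + 2))

/-- The Harary graph `H_{4n+1,4n+4}`: circulant with jumps `1,...,2n` and `2n+2`. -/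
def harary41 (n : ℕ) : SimpleGraph (Fin (4 * n + 4)) :=
  SimpleGraph.fromRel (fun i j =>
    ∃ k, ((1 ≤ k ∧ k ≤ 2 * n) ∨ k = 2 * n + 2) ∧ ((i : ℕ) + k) % (4 * n + 4) = (j : ℕ))

/-- The join `G + K_1`. -/
def joinK1 {V : Type*} (G : SimpleGraph V) : SimpleGraph (V ⊕ Unit) :=
  SimpleGraph.fromRel (fun x y =>
    match x, y with
    | Sum.inl a, Sum.inl b => G.Adj a b
    | Sum.inl _, Sum.inr _ => True
    | Sum.inr _, _ => False)

/-- If |N(u) ∩ N(v)| = deg(u) - 1 = deg(v) - 1 for distinct u, v,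
then G is not distance magic. -/
theorem not_distance_magic_of_near_twin {V : Type*} [Fintype V] (G : SimpleGraph V)
    (u v : V) (huv : u ≠ v)
    (h1 : (((Finset.univ.filter (fun w => G.Adj u w)) ∩
            (Finset.univ.filter (fun w => G.Adj v w))).card : ℤ)
        = ((Finset.univ.filter (fun w => G.Adj u w)).card : ℤ) - 1)
    (h2 : (((Finset.univ.filter (fun w => G.Adj u w)) ∩
            (Finset.univ.filter (fun w => G.Adj v w))).card : ℤ)
        = ((Finset.univ.filter (fun w => G.Adj v w)).card : ℤ) - 1) :
    ¬ IsDistanceMagic G := by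
  rintro ⟨f, c, hc⟩
  set A := Finset.univ.filter (fun w => G.Adj u w) with hA
  set B := Finset.univ.filter (fun w => G.Adj v w) with hB
  have hAB : (A ∩ B).card + (A \ B).card = A.card := Finset.card_inter_add_card_sdiff A B
  have hBA : (B ∩ A).card + (B \ A).card = B.card := Finset.card_inter_add_card_sdiff B A
  rw [Finset.inter_comm B A] at hBA
  have hx1 : (A \ B).card = 1 := by omega
  have hy1 : (B \ A).card = 1 := by omega
  obtain ⟨x, hx⟩ := Finset.card_eq_one.mp hx1
  obtain ⟨y, hy⟩ := Finset.card_eq_one.mp hy1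
  have hxA : x ∈ A \ B := hx ▸ Finset.mem_singleton_self x
  have hyB : y ∈ B \ A := hy ▸ Finset.mem_singleton_self y
  have hxy : x ≠ y := by
    intro h
    exact (Finset.mem_sdiff.mp hxA).2 (h ▸ (Finset.mem_sdiff.mp hyB).1)
  set g : V → ℕ := fun w => (f w : ℕ) + 1 with hg
  have hsu : ∑ w ∈ A ∩ B, g w + ∑ w ∈ A \ B, g w = ∑ w ∈ A, g w :=
    Finset.sum_inter_add_sum_sdiff A B g
  have hsv : ∑ w ∈ B ∩ A, g w + ∑ w ∈ B \ A, g w = ∑ w ∈ B, g w :=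
    Finset.sum_inter_add_sum_sdiff B A g
  rw [Finset.inter_comm B A] at hsv
  have hcu : ∑ w ∈ A, g w = c := hc u
  have hcv : ∑ w ∈ B, g w = c := hc v
  rw [hx, Finset.sum_singleton] at hsu
  rw [hy, Finset.sum_singleton] at hsv
  have : g x = g y := by omega
  have : f x = f y := by
    apply Fin.ext
    simpa [hg] using this
  exact hxy (f.injective this)
end

section
/- For n odd, n ≥ 3, the direct (tensor) product ((K_{n−1} − M) + K_1) × C_4 is distance magic if and only if n = 5. -/
open scoped Classical
open Finset

/-!
Write `n = 2k + 1`. A neighbourhood in `G × C₄` is a product of neighbourhoods, and in `C₄` the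
vertices `0` and `1` have the complementary neighbourhoods `{1, 3}` and `{0, 2}`. So for a
distance magic labelling `L` with constant `c`, the weights `φ_h a = ∑_{b ∼ h} L (a, b)`
(`h = 0, 1`) have constant neighbourhood sums `c` on `calG n`, and `φ_0 + φ_1` sums to the sum
of all labels. In `calG n` the hub misses only itself and every other vertex misses only itself
and its partner, so `φ i + φ (M i) = φ 0`, hence `c = k φ 0` and `∑ φ = (k + 1) φ 0`. Thus
`φ_0 0 = φ_1 0`, and summing all labels gives `(k + 1) φ_0 0 = (2k + 1)(8k + 5)`, whence
`k + 1 ∣ 3` and `n = 5`. For `n = 5` an explicit labelling works.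
-/

instance (N m : ℕ) : DecidableRel (circulant N m).Adj := fun i j =>
  decidable_of_iff (i ≠ j ∧ ((∃ k ≤ m, 1 ≤ k ∧ ((i : ℕ) + k) % N = j) ∨
      ∃ k ≤ m, 1 ≤ k ∧ ((j : ℕ) + k) % N = i)) <| by
    simp only [circulant, SimpleGraph.fromRel_adj, and_left_comm]

instance (n : ℕ) : DecidableRel (calG n).Adj := fun i j =>
  decidable_of_iff' _ (SimpleGraph.fromRel_adj _ i j)

instance {α β : Type*} (G : SimpleGraph α) (H : SimpleGraph β) [DecidableRel G.Adj]
    [DecidableRel H.Adj] : DecidableRel (tensorProd G H).Adj := fun x y =>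
  inferInstanceAs (Decidable (G.Adj x.1 y.1 ∧ H.Adj x.2 y.2))

section Weight

variable {V : Type*} [Fintype V]

theorem wsum_eq_sum_filter (G : SimpleGraph V) [DecidableRel G.Adj] (f : V → ℕ) (u : V) :
    wsum G f u = ∑ v ∈ univ.filter (G.Adj u), f v := by
  unfold wsum
  congr

theorem wsum_add_sum_eq_sum {G : SimpleGraph V} (f : V → ℕ) {u : V} {s : Finset V}
    (hs : ∀ v, G.Adj u v ↔ v ∉ s) : wsum G f u + ∑ v ∈ s, f v = ∑ v, f v := by
  have : univ.filter (fun v => G.Adj u v) = sᶜ := by ext v; simp [hs]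
  rw [wsum, this, sum_compl_add_sum]

theorem wsum_tensorProd {W : Type*} [Fintype W] (G : SimpleGraph V) (H : SimpleGraph W)
    (f : V × W → ℕ) (g : V) (h : W) :
    wsum (tensorProd G H) f (g, h) = wsum G (fun a => wsum H (fun b => f (a, b)) h) g := by
  simp only [wsum, ← sum_product']
  congr 1
  ext ⟨a, b⟩
  simp only [mem_product, mem_filter, mem_univ, true_and]
  rfl

theorem sum_equiv_fin_add_one_mul_two (f : V ≃ Fin (Fintype.card V)) :
    (∑ v, ((f v : ℕ) + 1)) * 2 = Fintype.card V * (Fintype.card V + 1) := by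
  rw [Equiv.sum_comp f (fun j => (j : ℕ) + 1), Fin.sum_univ_eq_sum_range (· + 1),
    ← sum_range_succ' (fun i => i) _ |>.trans (add_zero _), sum_range_id_mul_two,
    Nat.add_sub_cancel]
  ring

end Weight

theorem wsum_circulant_four_zero_add_one (f : Fin 4 → ℕ) :
    wsum (circulant 4 1) f 0 + wsum (circulant 4 1) f 1 = ∑ b, f b := by
  have h0 := wsum_add_sum_eq_sum (G := circulant 4 1) (u := 0) f (s := {0, 2}) (by decide)
  have h1 := wsum_add_sum_eq_sum (G := circulant 4 1) (u := 1) f (s := {1, 3}) (by decide)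
  rw [sum_pair (by decide)] at h0 h1
  rw [Fin.sum_univ_four] at *
  omega

theorem calG_adj_zero {n : ℕ} [NeZero n] (v : Fin n) : (calG n).Adj 0 v ↔ v ≠ 0 := by
  simp [calG, SimpleGraph.fromRel_adj, eq_comm]

theorem add_mod_add_self_eq_iff {k a b : ℕ} (ha : a < k + k) (hb : b < k + k) :
    (a + k) % (k + k) = b ↔ a + k = b ∨ b + k = a := by
  rcases lt_or_ge a k with h | h
  · rw [Nat.mod_eq_of_lt (by omega)]
    omega
  · rw [Nat.mod_eq_sub_mod (by omega), Nat.mod_eq_of_lt (by omega)]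
    omega

-- Stated for `n = k + k + 1` so that `Fin.sum_univ_add` splits the non-hub vertices into
-- `1, …, k` and their partners `k + 1, …, 2k`.
theorem calG_adj_iff {k : ℕ} {i j : Fin (k + k + 1)} :
    (calG (k + k + 1)).Adj i j ↔
      i ≠ j ∧ ((i : ℕ) = 0 ∨ (j : ℕ) = 0 ∨ (i : ℕ) + k ≠ j ∧ (j : ℕ) + k ≠ i) := by
  have hk : (k + k) / 2 = k := by omega
  simp only [calG, SimpleGraph.fromRel_adj, Nat.add_sub_cancel, hk, ne_eq, Fin.ext_iff]
  by_cases hi : (i : ℕ) = 0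
  · simp [hi]
  by_cases hj : (j : ℕ) = 0
  · simp [hj]
  have hi' := i.isLt
  have hj' := j.isLt
  rw [add_mod_add_self_eq_iff (by omega) (by omega), add_mod_add_self_eq_iff (by omega) (by omega)]
  omega

theorem calG_adj_castAdd_succ_iff {k : ℕ} (i : Fin k) (v : Fin (k + k + 1)) :
    (calG (k + k + 1)).Adj (i.castAdd k).succ v ↔
      v ∉ ({(i.castAdd k).succ, (i.natAdd k).succ} : Finset _) := by
  have := i.isLt
  rw [calG_adj_iff]
  simp only [Finset.mem_insert, Finset.mem_singleton, ne_eq, Fin.ext_iff, Fin.val_succ,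
    Fin.val_castAdd, Fin.val_natAdd]
  omega

theorem calG_sum_of_wsum_eq_const {k c : ℕ} {φ : Fin (k + k + 1) → ℕ}
    (hφ : ∀ g, wsum (calG (k + k + 1)) φ g = c) : c = k * φ 0 ∧ ∑ a, φ a = (k + 1) * φ 0 := by
  have hub := wsum_add_sum_eq_sum φ (s := {0}) (by simpa using calG_adj_zero)
  rw [hφ, sum_singleton] at hub
  have hpair (i : Fin k) : φ (i.castAdd k).succ + φ (i.natAdd k).succ = φ 0 := by
    have hne : (i.castAdd k).succ ≠ (i.natAdd k).succ := by
      rw [ne_eq, Fin.succ_inj, Fin.ext_iff, Fin.val_castAdd, Fin.val_natAdd]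
      omega
    have h := wsum_add_sum_eq_sum φ (calG_adj_castAdd_succ_iff i)
    rw [hφ, sum_pair hne] at h
    omega
  have htotal : ∑ a, φ a = (k + 1) * φ 0 := by
    rw [Fin.sum_univ_succ, Fin.sum_univ_add, ← sum_add_distrib]
    simp only [hpair, sum_const, card_univ, Fintype.card_fin, smul_eq_mul]
    ring
  exact ⟨by linarith, htotal⟩

theorem eq_two_of_succ_mul_eq {k b : ℕ} (hk : 1 ≤ k)
    (h : (k + 1) * b = (2 * k + 1) * (8 * k + 5)) : k = 2 := by
  have hdvd : k + 1 ∣ (k + 1) * (16 * k + 2) + 3 := ⟨b, by linarith⟩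
  have h3 := (Nat.dvd_add_right (dvd_mul_right _ _)).mp hdvd
  have : k ≤ 2 := by have := Nat.le_of_dvd (by norm_num) h3; omega
  interval_cases k <;> omega

theorem eq_two_of_isDistanceMagic_tensorProd_calG {k : ℕ} (hk : 1 ≤ k)
    (h : IsDistanceMagic (tensorProd (calG (k + k + 1)) (circulant 4 1))) : k = 2 := by
  obtain ⟨f, c, hf⟩ := h
  set φ : Fin 4 → Fin (k + k + 1) → ℕ :=
    fun h a => wsum (circulant 4 1) (fun b => (f (a, b) : ℕ) + 1) h
  have hφ (h : Fin 4) (g) : wsum (calG (k + k + 1)) (φ h) g = c :=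
    (wsum_tensorProd _ _ _ g h).symm.trans (hf (g, h))
  obtain ⟨hc0, hsum0⟩ := calG_sum_of_wsum_eq_const (hφ 0)
  obtain ⟨hc1, hsum1⟩ := calG_sum_of_wsum_eq_const (hφ 1)
  have hhub : φ 1 0 = φ 0 0 := Nat.eq_of_mul_eq_mul_left hk (hc1.symm.trans hc0)
  have htotal : ∑ v, ((f v : ℕ) + 1) = ∑ a, (φ 0 a + φ 1 a) := by
    simp only [Fintype.sum_prod_type, φ, wsum_circulant_four_zero_add_one]
  have hcard : Fintype.card (Fin (k + k + 1) × Fin 4) = 4 * (k + k + 1) := by simp [mul_comm]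
  have hlabels := sum_equiv_fin_add_one_mul_two f
  rw [htotal, sum_add_distrib, hsum0, hsum1, hhub, hcard] at hlabels
  exact eq_two_of_succ_mul_eq (b := φ 0 0) hk (by linarith)

-- Row `g` lists the labels minus one of `(g, 0), …, (g, 3)`; the magic constant is `70`.
noncomputable def calGFiveC4Labelling : Fin 5 × Fin 4 ≃ Fin 20 :=
  Equiv.ofBijective (fun p => ![![14, 15, 19, 18], ![17, 16, 0, 2], ![4, 5, 6, 7],
    ![1, 3, 13, 10], ![9, 8, 12, 11]] p.1 p.2) (by decide)

theorem isDistanceMagic_tensorProd_calG_five :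
    IsDistanceMagic (tensorProd (calG 5) (circulant 4 1)) := by
  refine ⟨calGFiveC4Labelling.trans (finCongr (by simp)), 70, fun u => ?_⟩
  rw [wsum_eq_sum_filter]
  revert u
  decide

/-- ((K_{n-1} - M) + K_1) × C_4 is distance magic iff n = 5 (n odd, n ≥ 3). -/
theorem calG_tensor_C4_distance_magic_iff (n : ℕ) (hn : 3 ≤ n) (hodd : Odd n) :
    IsDistanceMagic (tensorProd (calG n) (circulant 4 1)) ↔ n = 5 := by
  obtain ⟨k, hk⟩ := hodd
  obtain rfl : n = k + k + 1 := by omega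
  constructor
  · intro h
    have := eq_two_of_isDistanceMagic_tensorProd_calG (by omega) h
    omega
  · intro h5
    obtain rfl : k = 2 := by omega
    exact isDistanceMagic_tensorProd_calG_five
end

section
/- If G is an r-regular (a,d)-distance antimagic graph on n vertices (n ≥ 2), then d ≤ r(n−r)/(n−1) and a = (r(n+1) − d(n−1))/2. -/
open scoped Classical
open Finset

/-! The weights of an `r`-regular labelling sum to `r · n(n+1)/2` by double counting, while an
arithmetic progression `a, a+d, …` of length `n` sums to `n(2a+(n-1)d)/2`; comparing the two gives
the formula for `a`. A vertex weight is a sum of `r` distinct labels from `1, …, n`, so it lies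
between `1 + ⋯ + r` and `(n-r+1) + ⋯ + n`; the spread `(n-1)d` between the largest and the
smallest weight is therefore at most `r(n-r)`. -/

namespace Finset

theorem sum_range_card_le_sum (s : Finset ℕ) : ∑ i ∈ range #s, i ≤ ∑ i ∈ s, i := by
  induction s using Finset.induction_on_max with
  | empty => simp
  | insert m s hlt ih =>
    have hcard : #s ≤ m := by
      simpa using card_le_card fun x hx => mem_range.2 (hlt x hx)
    rw [card_insert_of_notMem fun hm => (hlt m hm).false, sum_range_succ,
      sum_insert fun hm => (hlt m hm).false]
    omega

theorem card_mul_card_add_one_le_two_mul_sum_val_add_one {n : ℕ} (t : Finset (Fin n)) :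
    #t * (#t + 1) ≤ 2 * ∑ i ∈ t, ((i : ℕ) + 1) := by
  have hle : ∑ i ∈ range #t, i ≤ ∑ i ∈ t, (i : ℕ) := by
    simpa using sum_range_card_le_sum (t.map Fin.valEmbedding)
  have hgauss := sum_range_id_mul_two (#t + 1)
  rw [sum_range_succ] at hgauss
  rw [sum_add_distrib, sum_const, smul_eq_mul, mul_one]
  simp only [add_tsub_cancel_right] at hgauss
  linarith

theorem two_mul_sum_val_add_one_add_card_mul_card_le {n : ℕ} (t : Finset (Fin n)) :
    2 * ∑ i ∈ t, ((i : ℕ) + 1) + #t * #t ≤ #t * (2 * n + 1) := by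
  have hrev := card_mul_card_add_one_le_two_mul_sum_val_add_one (t.map Fin.revPerm.toEmbedding)
  have hpair :
      ∑ i ∈ t, ((i : ℕ) + 1) + ∑ i ∈ t, ((Fin.rev i : ℕ) + 1) = #t * (n + 1) := by
    rw [← sum_add_distrib]
    exact sum_const_nat fun i _ => by rw [Fin.val_rev]; omega
  simp only [card_map, sum_map, Equiv.coe_toEmbedding, Fin.revPerm_apply] at hrev
  linarith

end Finset

open Finset

theorem two_mul_sum_equiv_fin_add_one {V : Type*} [Fintype V] {n : ℕ} (ℓ : V ≃ Fin n) :
    2 * ∑ v, ((ℓ v : ℕ) + 1) = n * (n + 1) := by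
  rw [ℓ.sum_comp fun i => (i : ℕ) + 1, Fin.sum_univ_eq_sum_range fun i => i + 1]
  have hgauss := sum_range_id_mul_two (n + 1)
  rw [sum_range_succ'] at hgauss
  simp only [add_zero, add_tsub_cancel_right] at hgauss
  linarith

theorem two_mul_sum_fin_add_val_mul (n a d : ℕ) :
    2 * ∑ i : Fin n, (a + i * d) = n * (2 * a + (n - 1) * d) := by
  have hgauss := sum_range_id_mul_two n
  rw [Fin.sum_univ_eq_sum_range fun i => a + i * d, sum_add_distrib, ← sum_mul, sum_const,
    card_range, smul_eq_mul]
  calc 2 * (n * a + (∑ i ∈ range n, i) * d)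
      _ = 2 * n * a + ((∑ i ∈ range n, i) * 2) * d := by ring
      _ = n * (2 * a + (n - 1) * d) := by rw [hgauss]; ring

section ArithmeticProgression

variable {ι : Type*} [Fintype ι] {w : ι → ℕ} {a d : ℕ}

theorem exists_apply_eq_of_image_eq
    (hw : univ.image w = univ.image fun i : Fin (Fintype.card ι) => a + i * d)
    (i : Fin (Fintype.card ι)) : ∃ u, w u = a + i * d := by
  have hmem := mem_image_of_mem (fun i : Fin (Fintype.card ι) => a + i * d) (mem_univ i)
  simpa [← hw] using hmem

theorem two_mul_sum_of_image_eq
    (hw : univ.image w = univ.image fun i : Fin (Fintype.card ι) => a + i * d) :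
    2 * ∑ u, w u = Fintype.card ι * (2 * a + (Fintype.card ι - 1) * d) := by
  rw [← two_mul_sum_fin_add_val_mul]
  rcases Nat.eq_zero_or_pos d with rfl | hd
  · have hconst : ∀ u, w u = a := fun u => by
      obtain ⟨i, -, hi⟩ := mem_image.1 (hw ▸ mem_image_of_mem w (mem_univ u))
      simpa using hi.symm
    simp [hconst]
  · have hinj : Function.Injective fun i : Fin (Fintype.card ι) => a + i * d := fun i j hij =>
      Fin.ext (Nat.eq_of_mul_eq_mul_right hd (by simpa using hij))
    have hw_inj : Set.InjOn w (univ : Finset ι) := by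
      rw [← card_image_iff, hw, card_image_of_injective _ hinj, card_univ,
        Fintype.card_fin, card_univ]
    rw [← sum_image (f := fun x => x) hw_inj, hw, sum_image fun i _ j _ hij => hinj hij]

end ArithmeticProgression

section Regular

variable {V : Type*} [Fintype V] {G : SimpleGraph V} {r : ℕ}

theorem IsRegularDeg.sum_wsum (hreg : IsRegularDeg G r) (f : V → ℕ) :
    ∑ u, wsum G f u = r * ∑ v, f v := by
  simp only [wsum, sum_filter]
  rw [sum_comm, mul_sum]
  refine sum_congr rfl fun v _ => ?_
  rw [← sum_filter, sum_const, smul_eq_mul, ← hreg v]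
  simp_rw [G.adj_comm]

theorem wsum_equiv_fin_eq_sum_map {n : ℕ} (ℓ : V ≃ Fin n) (u : V) :
    wsum G (fun v => (ℓ v : ℕ) + 1) u
      = ∑ i ∈ (univ.filter (G.Adj u)).map ℓ.toEmbedding, ((i : ℕ) + 1) := by
  simp [wsum]

theorem IsRegularDeg.mul_add_one_le_two_mul_wsum (hreg : IsRegularDeg G r) {n : ℕ}
    (ℓ : V ≃ Fin n) (u : V) : r * (r + 1) ≤ 2 * wsum G (fun v => (ℓ v : ℕ) + 1) u := by
  simpa [wsum_equiv_fin_eq_sum_map, hreg u] using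
    card_mul_card_add_one_le_two_mul_sum_val_add_one ((univ.filter (G.Adj u)).map ℓ.toEmbedding)

theorem IsRegularDeg.two_mul_wsum_add_mul_self_le (hreg : IsRegularDeg G r) {n : ℕ}
    (ℓ : V ≃ Fin n) (u : V) :
    2 * wsum G (fun v => (ℓ v : ℕ) + 1) u + r * r ≤ r * (2 * n + 1) := by
  simpa [wsum_equiv_fin_eq_sum_map, hreg u] using
    two_mul_sum_val_add_one_add_card_mul_card_le ((univ.filter (G.Adj u)).map ℓ.toEmbedding)

end Regular

/-- for an r-regular (a,d)-distance antimagic graph on n ≥ 2 vertices,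
d ≤ r(n-r)/(n-1) and a = (r(n+1)-d(n-1))/2. -/
theorem regular_antimagic_bounds {V : Type*} [Fintype V] (G : SimpleGraph V)
    (r a d : ℕ) (hn : 2 ≤ Fintype.card V) (hreg : IsRegularDeg G r)
    (h : IsDistAntimagic G a d) :
    (d : ℤ) * ((Fintype.card V : ℤ) - 1) ≤ (r : ℤ) * ((Fintype.card V : ℤ) - (r : ℤ)) ∧
    2 * (a : ℤ) = (r : ℤ) * ((Fintype.card V : ℤ) + 1) - (d : ℤ) * ((Fintype.card V : ℤ) - 1) := by
  obtain ⟨ℓ, hℓ⟩ := h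
  have hsum : Fintype.card V * (r * (Fintype.card V + 1))
      = Fintype.card V * (2 * a + (Fintype.card V - 1) * d) := by
    rw [mul_left_comm, ← two_mul_sum_equiv_fin_add_one ℓ, ← two_mul_sum_of_image_eq hℓ,
      hreg.sum_wsum]
    ring
  have hdouble := Nat.eq_of_mul_eq_mul_left (by omega) hsum
  obtain ⟨u₀, hu₀⟩ := exists_apply_eq_of_image_eq hℓ ⟨0, by omega⟩
  obtain ⟨u₁, hu₁⟩ := exists_apply_eq_of_image_eq hℓ ⟨Fintype.card V - 1, by omega⟩
  have hmin := hreg.mul_add_one_le_two_mul_wsum ℓ u₀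
  have hmax := hreg.two_mul_wsum_add_mul_self_le ℓ u₁
  rw [hu₀, zero_mul, add_zero] at hmin
  rw [hu₁] at hmax
  zify [show 1 ≤ Fintype.card V by omega] at hdouble hmin hmax
  constructor <;> linarith
end

section
/- The graph H_{4n+1,4n+4} is (a,d)-distance antimagic if and only if d = 1, with a = 8n² + 10n + 1. -/
open scoped Classical
open Finset

/-!
Every vertex `u` of `H_{4n+1,4n+4}` misses exactly `u` and `u ± (2n+1)`, so its weight is the
total label sum `S = (2n+2)(4n+5)` minus the labels of these three vertices.

Necessity: summing weights gives `2a + (4n+3)d = (4n+1)(4n+5)`, so `d` is odd; the smallest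
weight `a` is at least `S` minus the three largest labels, which forces `d < 3`.

Sufficiency: multiplication by `2n+3` (an involution of `ℤ/(4n+4)`) carries `u ± (2n+1)` to
`t ∓ 1`, where `t` is the image of `u`, so the missing triples become the consecutive triples
of a `(4n+4)`-cycle. The cycle is labelled so that these triple sums are `4n+6, …, 8n+9`.
-/

section WeightSums

variable {V : Type*} [Fintype V]

theorem wsum_add_sum_not_adj (G : SimpleGraph V) (ℓ : V → ℕ) (u : V) :
    wsum G ℓ u + ∑ v ∈ univ.filter (fun v => ¬ G.Adj u v), ℓ v = ∑ v, ℓ v :=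
  sum_filter_add_sum_filter_not _ _ _

theorem two_mul_sum_fin_succ (N : ℕ) : 2 * ∑ i : Fin N, ((i : ℕ) + 1) = N * (N + 1) := by
  have h := sum_range_id_mul_two (N + 1)
  rw [sum_range_succ'] at h
  rw [Fin.sum_univ_eq_sum_range (· + 1)]
  simpa [mul_comm] using h

theorem two_mul_sum_equiv_succ (f : V ≃ Fin (Fintype.card V)) :
    2 * ∑ v, ((f v : ℕ) + 1) = Fintype.card V * (Fintype.card V + 1) := by
  rw [Equiv.sum_comp f (fun i => (i : ℕ) + 1), two_mul_sum_fin_succ]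

theorem two_mul_sum_of_image_eq_arith {W : V → ℕ} {a d : ℕ}
    (h : univ.image W = univ.image (fun i : Fin (Fintype.card V) => a + i * d)) :
    2 * ∑ u, W u = Fintype.card V * (2 * a + (Fintype.card V - 1) * d) := by
  rcases Nat.eq_zero_or_pos d with rfl | hd
  · have hW : ∀ u, W u = a := fun u => by
      obtain ⟨i, -, hi⟩ := mem_image.1 (h ▸ mem_image_of_mem W (mem_univ u))
      simpa using hi.symm
    simp only [hW, sum_const, card_univ, smul_eq_mul]
    ring
  · have hAP : Function.Injective (fun i : Fin (Fintype.card V) => a + i * d) := fun i j hij =>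
      Fin.ext (Nat.eq_of_mul_eq_mul_right hd (Nat.add_left_cancel hij))
    have hWinj : Set.InjOn W (univ : Finset V) := by
      rw [← card_image_iff, h, card_image_of_injective _ hAP, card_univ, card_univ,
        Fintype.card_fin]
    have hsum : (∑ i ∈ range (Fintype.card V), i) * 2 = _ := sum_range_id_mul_two _
    have hWsum : ∑ u, W u = ∑ x ∈ univ.image W, x := (sum_image (f := fun x => x) hWinj).symm
    rw [hWsum, h, sum_image (fun i _ j _ hij => hAP hij), sum_add_distrib,
      ← sum_mul, Fin.sum_univ_eq_sum_range (fun i => i)]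
    simp only [sum_const, card_univ, Fintype.card_fin, smul_eq_mul]
    nlinarith

theorem exists_equiv_fin_succ_eq {ℓ : V → ℕ} (hinj : Function.Injective ℓ)
    (hrange : ∀ v, 1 ≤ ℓ v ∧ ℓ v ≤ Fintype.card V) :
    ∃ f : V ≃ Fin (Fintype.card V), ∀ v, (f v : ℕ) + 1 = ℓ v := by
  let g : V → Fin (Fintype.card V) := fun v => ⟨ℓ v - 1, by have := hrange v; omega⟩
  have hg : Function.Injective g := fun v w hvw => hinj <| by
    have := hrange v; have := hrange w; have := Fin.val_eq_of_eq hvw; simp only [g] at this; omega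
  refine ⟨Equiv.ofBijective g ((Fintype.bijective_iff_injective_and_card g).2 ⟨hg, by simp⟩),
    fun v => ?_⟩
  have := hrange v
  simp only [Equiv.ofBijective_apply, g]
  omega

theorem image_eq_arith_one {W : V → ℕ} {a : ℕ} (hinj : Function.Injective W)
    (hrange : ∀ u, a ≤ W u ∧ W u < a + Fintype.card V) :
    univ.image W = univ.image (fun i : Fin (Fintype.card V) => a + i * 1) := by
  refine eq_of_subset_of_card_le (fun x hx => ?_) ?_
  · obtain ⟨u, -, rfl⟩ := mem_image.1 hx
    have := hrange u
    exact mem_image.2 ⟨⟨W u - a, by omega⟩, mem_univ _, by simp; omega⟩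
  · rw [card_image_of_injective _ hinj]
    exact card_image_le.trans (by simp)

end WeightSums

theorem Nat.mod_eq_ite_of_lt_two_mul {x N : ℕ} (h : x < 2 * N) :
    x % N = if N ≤ x then x - N else x := by
  split_ifs with hx
  · rw [Nat.mod_eq_sub_mod hx, Nat.mod_eq_of_lt (by omega)]
  · exact Nat.mod_eq_of_lt (by omega)

section Harary41

variable {n : ℕ}

def missingJump (n : ℕ) : Fin (4 * n + 4) := ⟨2 * n + 1, by omega⟩

theorem val_add_missingJump (u : Fin (4 * n + 4)) :
    ((u + missingJump n : Fin (4 * n + 4)) : ℕ) = (u + (2 * n + 1)) % (4 * n + 4) :=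
  Fin.val_add _ _

theorem val_sub_missingJump (u : Fin (4 * n + 4)) :
    ((u - missingJump n : Fin (4 * n + 4)) : ℕ) = (u + (2 * n + 3)) % (4 * n + 4) := by
  rw [Fin.sub_def]
  simp only [missingJump]
  congr 1
  omega

theorem harary41_adj_iff {u v : Fin (4 * n + 4)} :
    (harary41 n).Adj u v ↔ v ≠ u ∧ v ≠ u + missingJump n ∧ v ≠ u - missingJump n := by
  have hu := u.isLt
  have hv := v.isLt
  simp only [harary41, SimpleGraph.fromRel_adj, ne_eq, Fin.ext_iff, val_add_missingJump,
    val_sub_missingJump]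
  rw [Nat.mod_eq_ite_of_lt_two_mul (by omega), Nat.mod_eq_ite_of_lt_two_mul (by omega)]
  constructor
  · rintro ⟨-, ⟨k, hk, hkv⟩ | ⟨k, hk, hku⟩⟩
    · rw [Nat.mod_eq_ite_of_lt_two_mul (by omega)] at hkv
      split_ifs at hkv <;> split_ifs <;> omega
    · rw [Nat.mod_eq_ite_of_lt_two_mul (by omega)] at hku
      split_ifs at hku <;> split_ifs <;> omega
  · rintro ⟨hvu, h₁, h₂⟩
    refine ⟨fun h' => hvu (by rw [h']), ?_⟩
    have mod_eq {x} (hx : x < 2 * (4 * n + 4)) := Nat.mod_eq_ite_of_lt_two_mul hx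
    replace h₁ : (v : ℕ) ≠ u + (2 * n + 1) ∧ v + (4 * n + 4) ≠ u + (2 * n + 1) := by
      split_ifs at h₁ <;> omega
    replace h₂ : (v : ℕ) ≠ u + (2 * n + 3) ∧ v + (4 * n + 4) ≠ u + (2 * n + 3) := by
      split_ifs at h₂ <;> omega
    rcases Nat.lt_or_gt_of_ne hvu with hlt | hlt
    · by_cases hJ : u - v ≤ 2 * n ∨ u - v = 2 * n + 2
      · exact Or.inr ⟨u - v, by omega, by rw [mod_eq (by omega)]; split_ifs <;> omega⟩
      · exact Or.inl ⟨4 * n + 4 - (u - v), by omega,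
          by rw [mod_eq (by omega)]; split_ifs <;> omega⟩
    · by_cases hJ : v - u ≤ 2 * n ∨ v - u = 2 * n + 2
      · exact Or.inl ⟨v - u, by omega, by rw [mod_eq (by omega)]; split_ifs <;> omega⟩
      · exact Or.inr ⟨4 * n + 4 - (v - u), by omega,
          by rw [mod_eq (by omega)]; split_ifs <;> omega⟩

theorem harary41_nonadj_ne (u : Fin (4 * n + 4)) :
    u ≠ u + missingJump n ∧ u ≠ u - missingJump n ∧
      u + missingJump n ≠ u - missingJump n := by
  have hu := u.isLt
  simp only [ne_eq, Fin.ext_iff, val_add_missingJump, val_sub_missingJump]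
  rw [Nat.mod_eq_ite_of_lt_two_mul (by omega), Nat.mod_eq_ite_of_lt_two_mul (by omega)]
  split_ifs <;> omega

theorem filter_not_harary41_adj (u : Fin (4 * n + 4)) :
    univ.filter (fun v => ¬ (harary41 n).Adj u v) = {u, u + missingJump n, u - missingJump n} := by
  ext v
  simp only [mem_filter, mem_univ, true_and, harary41_adj_iff, mem_insert, mem_singleton]
  tauto

theorem wsum_harary41_add (ℓ : Fin (4 * n + 4) → ℕ) (u : Fin (4 * n + 4)) :
    wsum (harary41 n) ℓ u + (ℓ u + ℓ (u + missingJump n) + ℓ (u - missingJump n)) =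
      ∑ v, ℓ v := by
  obtain ⟨h₁, h₂, h₃⟩ := harary41_nonadj_ne u
  rw [← wsum_add_sum_not_adj (harary41 n) ℓ u, filter_not_harary41_adj,
    sum_insert (by simp [h₁, h₂]), sum_pair h₃, add_assoc]

theorem sum_wsum_harary41_add (ℓ : Fin (4 * n + 4) → ℕ) :
    ∑ u, wsum (harary41 n) ℓ u + 3 * ∑ v, ℓ v = (4 * n + 4) * ∑ v, ℓ v := by
  have hadd : ∑ v, ℓ (v + missingJump n) = ∑ v, ℓ v :=
    Fintype.sum_equiv (Equiv.addRight (missingJump n)) _ _ fun _ => rfl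
  have hsub : ∑ v, ℓ (v - missingJump n) = ∑ v, ℓ v :=
    Fintype.sum_equiv (Equiv.subRight (missingJump n)) _ _ fun _ => rfl
  have := sum_congr rfl (fun u (_ : u ∈ univ) => wsum_harary41_add ℓ u)
  simp only [sum_add_distrib, hadd, hsub, sum_const, card_univ, Fintype.card_fin,
    smul_eq_mul] at this
  linarith

theorem harary41_nonadj_sum_le {ℓ : Fin (4 * n + 4) → ℕ} (hinj : Function.Injective ℓ)
    (hle : ∀ v, ℓ v ≤ 4 * n + 4) (u : Fin (4 * n + 4)) :
    ℓ u + ℓ (u + missingJump n) + ℓ (u - missingJump n) ≤ 3 * (4 * n + 3) := by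
  obtain ⟨h₁, h₂, h₃⟩ := harary41_nonadj_ne u
  have := hinj.ne h₁; have := hinj.ne h₂; have := hinj.ne h₃
  have := hle u; have := hle (u + missingJump n); have := hle (u - missingJump n)
  omega

theorem IsDistAntimagic.harary41_eq {a d : ℕ} (h : IsDistAntimagic (harary41 n) a d) :
    d = 1 ∧ a = 8 * n ^ 2 + 10 * n + 1 := by
  obtain ⟨f, himg⟩ := h
  set ℓ : Fin (4 * n + 4) → ℕ := fun v => (f v : ℕ) + 1 with hℓ
  have hcard : Fintype.card (Fin (4 * n + 4)) = 4 * n + 4 := Fintype.card_fin _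
  have hℓsum : 2 * ∑ v, ℓ v = (4 * n + 4) * (4 * n + 5) := by
    simpa [hcard] using two_mul_sum_equiv_succ f
  have hWsum : 2 * ∑ u, wsum (harary41 n) ℓ u = (4 * n + 4) * (2 * a + (4 * n + 3) * d) := by
    simpa [hcard] using two_mul_sum_of_image_eq_arith himg
  have hlin : 2 * a + (4 * n + 3) * d = (4 * n + 1) * (4 * n + 5) := by
    have := sum_wsum_harary41_add ℓ
    apply Nat.eq_of_mul_eq_mul_left (show 0 < 4 * n + 4 by omega)
    nlinarith
  obtain ⟨u, hu⟩ : ∃ u, wsum (harary41 n) ℓ u = a := by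
    have := mem_image_of_mem (fun i : Fin (Fintype.card (Fin (4 * n + 4))) => a + i * d)
      (mem_univ ⟨0, by simp⟩)
    obtain ⟨u, -, hu⟩ := mem_image.1 (himg ▸ this)
    exact ⟨u, by simpa using hu⟩
  have hmin : (4 * n + 1) * (4 * n + 2) ≤ 2 * a := by
    have hinj : Function.Injective ℓ := fun v w hvw =>
      f.injective (Fin.ext (by simpa [hℓ] using hvw))
    have hle : ∀ v, ℓ v ≤ 4 * n + 4 := fun v => by
      simpa [hℓ, hcard, Nat.lt_succ_iff] using (f v).isLt
    have := harary41_nonadj_sum_le hinj hle u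
    have := wsum_harary41_add ℓ u
    nlinarith
  have hd : d < 3 := by nlinarith
  -- the right-hand side of `hlin` is odd, which rules out `d = 0` and `d = 2`
  interval_cases d <;> ring_nf at hlin <;> omega

end Harary41

section Construction

open Fin.CommRing

variable {n : ℕ}

def cyclePos (n : ℕ) (v : Fin (4 * n + 4)) : Fin (4 * n + 4) := ((2 * n + 3 : ℕ) : Fin _) * v

theorem natCast_four_mul_add_four : ((4 * n + 4 : ℕ) : Fin (4 * n + 4)) = 0 :=
  Fin.natCast_self _

theorem missingJump_eq_natCast : missingJump n = ((2 * n + 1 : ℕ) : Fin (4 * n + 4)) :=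
  Fin.ext <| by rw [Fin.val_natCast, Nat.mod_eq_of_lt (by omega)]; rfl

theorem cyclePos_add_missingJump (u : Fin (4 * n + 4)) :
    cyclePos n (u + missingJump n) = cyclePos n u - 1 := by
  have h := natCast_four_mul_add_four (n := n)
  rw [missingJump_eq_natCast, cyclePos, cyclePos]
  push_cast at h ⊢
  linear_combination ((n : Fin (4 * n + 4)) + 1) * h

theorem cyclePos_sub_missingJump (u : Fin (4 * n + 4)) :
    cyclePos n (u - missingJump n) = cyclePos n u + 1 := by
  have h := natCast_four_mul_add_four (n := n)
  rw [missingJump_eq_natCast, cyclePos, cyclePos]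
  push_cast at h ⊢
  linear_combination -((n : Fin (4 * n + 4)) + 1) * h

theorem cyclePos_involutive : Function.Involutive (cyclePos n) := fun v => by
  have h := natCast_four_mul_add_four (n := n)
  rw [cyclePos, cyclePos]
  push_cast at h ⊢
  linear_combination ((n : Fin (4 * n + 4)) + 2) * v * h

def cycleLabel (n t : ℕ) : ℕ :=
  if t % 2 = 0 then t + 1 else if t % 4 = 1 then 4 * n + 3 - t else 4 * n + 7 - t

def tripleSum (n t : ℕ) : ℕ :=
  if t = 0 then 4 * n + 7 else if t = 4 * n + 3 then 4 * n + 8 else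
  if t % 2 = 0 then 8 * n + 11 - t else if t % 4 = 1 then 4 * n + 5 + t else 4 * n + 9 + t

theorem cycleLabel_mem_Icc {t : ℕ} (ht : t < 4 * n + 4) :
    1 ≤ cycleLabel n t ∧ cycleLabel n t ≤ 4 * n + 4 := by
  unfold cycleLabel; split_ifs <;> omega

theorem cycleLabel_injOn {s t : ℕ} (hs : s < 4 * n + 4) (ht : t < 4 * n + 4)
    (h : cycleLabel n s = cycleLabel n t) : s = t := by
  unfold cycleLabel at h; split_ifs at h <;> omega

theorem tripleSum_mem_Icc {t : ℕ} (ht : t < 4 * n + 4) :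
    4 * n + 6 ≤ tripleSum n t ∧ tripleSum n t ≤ 8 * n + 9 := by
  unfold tripleSum; split_ifs <;> omega

theorem tripleSum_injOn {s t : ℕ} (hs : s < 4 * n + 4) (ht : t < 4 * n + 4)
    (h : tripleSum n s = tripleSum n t) : s = t := by
  unfold tripleSum at h; split_ifs at h <;> omega

theorem cycleLabel_triple (t : Fin (4 * n + 4)) :
    cycleLabel n (t - 1 : Fin _) + cycleLabel n t + cycleLabel n (t + 1 : Fin _) =
      tripleSum n t := by
  have ht := t.isLt
  rw [Fin.coe_sub_one, Fin.val_add_one]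
  simp only [Fin.ext_iff, Fin.val_zero, Fin.val_last]
  unfold cycleLabel tripleSum
  split_ifs <;> omega

end Construction

theorem isDistAntimagic_harary41 (n : ℕ) :
    IsDistAntimagic (harary41 n) (8 * n ^ 2 + 10 * n + 1) 1 := by
  set ℓ : Fin (4 * n + 4) → ℕ := fun v => cycleLabel n (cyclePos n v) with hℓ
  have hcard : Fintype.card (Fin (4 * n + 4)) = 4 * n + 4 := Fintype.card_fin _
  have hinj : Function.Injective ℓ := fun v w h =>
    cyclePos_involutive.injective (Fin.ext (cycleLabel_injOn (Fin.isLt _) (Fin.isLt _) h))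
  obtain ⟨f, hf⟩ := exists_equiv_fin_succ_eq hinj fun v => by
    rw [hcard]; exact cycleLabel_mem_Icc (Fin.isLt _)
  have hℓsum : 2 * ∑ v, ℓ v = (4 * n + 4) * (4 * n + 5) := by
    simpa [hf, hcard] using two_mul_sum_equiv_succ f
  have hW (u : Fin (4 * n + 4)) :
      wsum (harary41 n) ℓ u + tripleSum n (cyclePos n u) = ∑ v, ℓ v := by
    rw [← wsum_harary41_add ℓ u, ← cycleLabel_triple, hℓ]
    simp only [cyclePos_add_missingJump, cyclePos_sub_missingJump]
    ring
  refine ⟨f, ?_⟩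
  rw [show (fun v => (f v : ℕ) + 1) = ℓ from funext hf]
  refine image_eq_arith_one (fun u v huv => ?_) fun u => ?_
  · have := hW u; have := hW v
    exact cyclePos_involutive.injective
      (Fin.ext (tripleSum_injOn (Fin.isLt _) (Fin.isLt _) (by omega)))
  · have := hW u
    have := tripleSum_mem_Icc (Fin.isLt (cyclePos n u))
    rw [hcard]
    ring_nf at hℓsum
    omega

/-- H_{4n+1,4n+4} is (a,d)-distance antimagic iff d = 1, with
a = 8n^2+10n+1. -/
theorem harary41_antimagic_iff (n : ℕ) :
    (∀ d : ℕ, (∃ a, IsDistAntimagic (harary41 n) a d) ↔ d = 1) ∧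
    IsDistAntimagic (harary41 n) (8 * n ^ 2 + 10 * n + 1) 1 := by
  refine ⟨fun d => ⟨?_, ?_⟩, isDistAntimagic_harary41 n⟩
  · rintro ⟨a, h⟩
    exact h.harary41_eq.1
  · rintro rfl
    exact ⟨_, isDistAntimagic_harary41 n⟩
end
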